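/- (A₁⁴ split of H₄.) Let τ = (1+√5)/2 and σ = (1−√5)/2, let g₁ = (1/2)(−1 + σ·i + τ·k) and g₂ = (1/2)(−τ + σ·j + k) be quaternions, and let G₀ be the multiplicative submonoid of ℍ generated by {g₁, g₂} (the binary icosahedral group 2I, with 120 elements, the roots of H₄). Let Q = {1, −1, i, −i, j, −j, k, −k} (the quaternion group, the root system A₁⊕A₁⊕A₁⊕A₁). Then Q ⊆ G₀, the complement G₀ \ Q has exactly 112 elements, and for every a ∈ Q and every x ∈ G₀ \ Q one has −(a * star x * a) ∈ G₀ \ Q; that is, the complement of A₁⁴ in the 600-cell is separately invariant under A₁⁴. -/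

import Mathlib

/-!
The generators have coordinates in `ℚ(√5)`, so `G₀` is the image, under the coordinatewise
embedding `ℍ[ℚ(√5)] → ℍ[ℝ]`, of the submonoid generated by two elements of `ℍ[ℚ(√5)]`; there
everything is exact and decidable. A breadth-first search, proved sound and complete once its
frontier is empty, computes that submonoid: 120 elements, among them the eight of `Q`.

For the reflections, `star g₁ = g₁ ^ 2` and `star g₂ = g₂ ^ 4` make `G₀` closed under `star`;
with `-1, a ∈ G₀` this keeps `-(a * star x * a)` in `G₀`. For a unit `a ∈ Q` the reflection is an
involution mapping `Q` into `Q`, so it cannot send a point outside `Q` into `Q`.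
-/

open scoped Quaternion

namespace Quaternion

variable {R S : Type*} [CommRing R] [CommRing S]

instance [DecidableEq R] : DecidableEq ℍ[R] := fun x y =>
  decidable_of_iff (x.re = y.re ∧ x.imI = y.imI ∧ x.imJ = y.imJ ∧ x.imK = y.imK)
    Quaternion.ext_iff.symm

/- Named units, rather than anonymous-constructor literals: a literal `⟨0, 1, 0, 0⟩ : ℍ[R]` is
elaborated at the unfolded type `QuaternionAlgebra R (-1) 0 (-1)`, on which the `ℍ[R]` lemmas
(`List.map_cons`, `re_map`, `re_mul`, …) no longer rewrite; hence also the `erw` in `map`. -/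
variable (R) in
def i : ℍ[R] := ⟨0, 1, 0, 0⟩

variable (R) in
def j : ℍ[R] := ⟨0, 0, 1, 0⟩

variable (R) in
def k : ℍ[R] := ⟨0, 0, 0, 1⟩

def map (f : R →+* S) : ℍ[R] →+* ℍ[S] where
  toFun x := ⟨f x.re, f x.imI, f x.imJ, f x.imK⟩
  map_one' := by ext <;> simp
  map_mul' x y := by
    ext
    · erw [re_mul, re_mul]; simp
    · erw [imI_mul, imI_mul]; simp
    · erw [imJ_mul, imJ_mul]; simp
    · erw [imK_mul, imK_mul]; simp
  map_zero' := by ext <;> simp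
  map_add' x y := by ext <;> exact map_add f _ _

@[simp] theorem re_map (f : R →+* S) (x : ℍ[R]) : (map f x).re = f x.re := rfl
@[simp] theorem imI_map (f : R →+* S) (x : ℍ[R]) : (map f x).imI = f x.imI := rfl
@[simp] theorem imJ_map (f : R →+* S) (x : ℍ[R]) : (map f x).imJ = f x.imJ := rfl
@[simp] theorem imK_map (f : R →+* S) (x : ℍ[R]) : (map f x).imK = f x.imK := rfl

theorem map_star (f : R →+* S) (x : ℍ[R]) : map f (star x) = star (map f x) := by
  ext <;> simp

theorem map_injective {f : R →+* S} (hf : Function.Injective f) :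
    Function.Injective (map f) := fun x y h => by
  ext
  · exact hf congr(($h).re)
  · exact hf congr(($h).imI)
  · exact hf congr(($h).imJ)
  · exact hf congr(($h).imK)

@[simp] theorem map_i (f : R →+* S) : map f (i R) = i S := by
  ext <;> simp only [re_map, imI_map, imJ_map, imK_map] <;> simp [i]

@[simp] theorem map_j (f : R →+* S) : map f (j R) = j S := by
  ext <;> simp only [re_map, imI_map, imJ_map, imK_map] <;> simp [j]

@[simp] theorem map_k (f : R →+* S) : map f (k R) = k S := by
  ext <;> simp only [re_map, imI_map, imJ_map, imK_map] <;> simp [k]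

end Quaternion

theorem List.ncard_setOf_mem {α : Type*} {l : List α} (hl : l.Nodup) :
    {x | x ∈ l}.ncard = l.length := by
  classical
  rw [← List.coe_toFinset, Set.ncard_coe_finset, List.toFinset_card_of_nodup hl]

theorem Submonoid.star_mem_closure {M : Type*} [Monoid M] [StarMul M] {s : Set M}
    (hs : ∀ x ∈ s, star x ∈ closure s) {x : M} (hx : x ∈ closure s) : star x ∈ closure s := by
  induction hx using closure_induction with
  | mem x hx => exact hs x hx
  | one => simp
  | mul x y _ _ hx hy => simpa using mul_mem hy hx

section Orbit

variable {M : Type*} [Monoid M] [DecidableEq M]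

/-- One round of a breadth-first search for the right orbit of `1` under `gens`, on pairs
`(seen, frontier)`; the new frontier consists of the products not seen before. -/
def orbitStep (gens : List M) (p : List M × List M) : List M × List M :=
  let new := ((p.2.flatMap fun x => gens.map (x * ·)).filter (· ∉ p.1)).dedup
  (new ++ p.1, new)

def orbitSearch (gens : List M) (n : ℕ) : List M × List M :=
  (orbitStep gens)^[n] ([1], [1])

def OrbitInvariant (gens : List M) (p : List M × List M) : Prop :=
  1 ∈ p.1 ∧ p.2 ⊆ p.1 ∧ (∀ x ∈ p.1, x ∈ Submonoid.closure {g | g ∈ gens}) ∧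
    ∀ x ∈ p.1, x ∉ p.2 → ∀ g ∈ gens, x * g ∈ p.1

theorem mem_orbitStep_snd {gens : List M} {p : List M × List M} {y : M} :
    y ∈ (orbitStep gens p).2 ↔ (∃ x ∈ p.2, ∃ g ∈ gens, x * g = y) ∧ y ∉ p.1 := by
  simp [orbitStep, List.mem_dedup, List.mem_filter, List.mem_flatMap]

theorem orbitInvariant_orbitStep {gens : List M} {p : List M × List M}
    (h : OrbitInvariant gens p) : OrbitInvariant gens (orbitStep gens p) := by
  obtain ⟨hone, hsub, hcl, hclosed⟩ := h
  have hfst : (orbitStep gens p).1 = (orbitStep gens p).2 ++ p.1 := rfl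
  refine ⟨?_, ?_, ?_, ?_⟩
  · rw [hfst]; exact List.mem_append_right _ hone
  · rw [hfst]; exact List.subset_append_left _ _
  · intro y hy
    rw [hfst, List.mem_append] at hy
    rcases hy with hy | hy
    · obtain ⟨⟨x, hx, g, hg, rfl⟩, -⟩ := mem_orbitStep_snd.1 hy
      exact mul_mem (hcl x (hsub hx)) (Submonoid.subset_closure hg)
    · exact hcl y hy
  · intro x hx hxnew g hg
    rw [hfst, List.mem_append] at hx ⊢
    rcases hx with hx | hx
    · exact absurd hx hxnew
    by_cases hxf : x ∈ p.2
    · by_cases hxg : x * g ∈ p.1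
      · exact Or.inr hxg
      · exact Or.inl (mem_orbitStep_snd.2 ⟨⟨x, hxf, g, hg, rfl⟩, hxg⟩)
    · exact Or.inr (hclosed x hx hxf g hg)

theorem orbitSearch_invariant (gens : List M) (n : ℕ) :
    OrbitInvariant gens (orbitSearch gens n) := by
  induction n with
  | zero =>
    refine ⟨List.mem_singleton_self 1, List.Subset.refl _, fun x hx => ?_,
      fun x hx hx' => absurd hx hx'⟩
    rw [List.mem_singleton.1 hx]
    exact one_mem _
  | succ n ih =>
    rw [orbitSearch, Function.iterate_succ_apply']
    exact orbitInvariant_orbitStep ih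

theorem coe_closure_eq_orbitSearch {gens : List M} {n : ℕ} (h : (orbitSearch gens n).2 = []) :
    (Submonoid.closure {g | g ∈ gens} : Set M) = {x | x ∈ (orbitSearch gens n).1} := by
  obtain ⟨hone, -, hcl, hclosed⟩ := orbitSearch_invariant gens n
  refine Set.Subset.antisymm (fun x hx => ?_) hcl
  induction hx using Submonoid.closure_induction_right with
  | one => exact hone
  | mul_right x _ g hg ih => exact hclosed x ih (by simp [h]) g hg

end Orbit

section Reflection

variable {R : Type*} [Ring R] [StarRing R]

theorem neg_mul_star_mul_involutive {a : R} (h₁ : a * star a = 1) (h₂ : star a * a = 1)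
    (x : R) : -(a * star (-(a * star x * a)) * a) = x := by
  simp only [star_neg, star_mul, star_star, mul_neg, neg_mul, neg_neg, ← mul_assoc, h₁, one_mul]
  rw [mul_assoc, h₂, mul_one]

theorem neg_mul_star_mul_mem_diff {G : Submonoid R} {Q : Set R} {a x : R}
    (hG : ∀ y ∈ G, star y ∈ G) (hneg : (-1 : R) ∈ G) (ha : a ∈ G)
    (h₁ : a * star a = 1) (h₂ : star a * a = 1) (hQ : ∀ y ∈ Q, -(a * star y * a) ∈ Q)
    (hx : x ∈ (G : Set R) \ Q) : -(a * star x * a) ∈ (G : Set R) \ Q := by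
  refine ⟨?_, fun hxQ => hx.2 ?_⟩
  · rw [← neg_one_mul]
    exact mul_mem hneg (mul_mem (mul_mem ha (hG x hx.1)) ha)
  · simpa only [neg_mul_star_mul_involutive h₁ h₂] using hQ _ hxQ

end Reflection

open Quaternion in
def quaternionGroup (R : Type*) [CommRing R] : List ℍ[R] :=
  [1, -1, i R, -i R, j R, -j R, k R, -k R]

theorem map_quaternionGroup {R S : Type*} [CommRing R] [CommRing S] (f : R →+* S) :
    (quaternionGroup R).map (Quaternion.map f) = quaternionGroup S := by
  simp [quaternionGroup]

theorem setOf_mem_quaternionGroup :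
    {x | x ∈ quaternionGroup ℝ} = {1, -1, ⟨0, 1, 0, 0⟩, -⟨0, 1, 0, 0⟩, ⟨0, 0, 1, 0⟩,
      -⟨0, 0, 1, 0⟩, ⟨0, 0, 0, 1⟩, -⟨0, 0, 0, 1⟩} := by
  ext x
  simp only [quaternionGroup, List.mem_cons, List.not_mem_nil, or_false, Set.mem_ofPred_eq,
    Set.mem_insert_iff]
  exact Iff.rfl

theorem quaternionGroup_nodup : (quaternionGroup ℤ).Nodup := by decide

theorem ncard_setOf_mem_quaternionGroup : {x | x ∈ quaternionGroup ℝ}.ncard = 8 := by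
  rw [← map_quaternionGroup (Int.castRingHom ℝ), List.ncard_setOf_mem
    (quaternionGroup_nodup.map (Quaternion.map_injective (Int.castRingHom ℝ).injective_int))]
  rfl

theorem mul_star_eq_one_of_mem_quaternionGroup :
    ∀ a ∈ quaternionGroup ℤ, a * star a = 1 ∧ star a * a = 1 := by decide

theorem neg_mul_star_mul_mem_quaternionGroup :
    ∀ a ∈ quaternionGroup ℤ, ∀ y ∈ quaternionGroup ℤ, -(a * star y * a) ∈ quaternionGroup ℤ := by
  decide

theorem neg_mul_star_mul_mem_diff_quaternionGroup {G : Submonoid ℍ[ℝ]}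
    (hG : ∀ y ∈ G, star y ∈ G) (hQG : {x | x ∈ quaternionGroup ℝ} ⊆ G)
    {a x : ℍ[ℝ]} (ha : a ∈ quaternionGroup ℝ)
    (hx : x ∈ (G : Set ℍ[ℝ]) \ {x | x ∈ quaternionGroup ℝ}) :
    -(a * star x * a) ∈ (G : Set ℍ[ℝ]) \ {x | x ∈ quaternionGroup ℝ} := by
  rw [← map_quaternionGroup (Int.castRingHom ℝ)] at ha hQG hx ⊢
  obtain ⟨b, hb, rfl⟩ := List.mem_map.1 ha
  obtain ⟨h₁, h₂⟩ := mul_star_eq_one_of_mem_quaternionGroup b hb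
  refine neg_mul_star_mul_mem_diff hG ?_ (hQG (List.mem_map_of_mem hb)) ?_ ?_ ?_ hx
  · simpa using hQG (List.mem_map_of_mem (f := Quaternion.map (Int.castRingHom ℝ))
      (by decide : -1 ∈ quaternionGroup ℤ))
  · rw [← Quaternion.map_star, ← map_mul, h₁, map_one]
  · rw [← Quaternion.map_star, ← map_mul, h₂, map_one]
  · rintro _ hy
    obtain ⟨y, hy', rfl⟩ := List.mem_map.1 hy
    rw [← Quaternion.map_star, ← map_mul, ← map_mul, ← map_neg]
    exact List.mem_map_of_mem (neg_mul_star_mul_mem_quaternionGroup b hb y hy')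

noncomputable def sqrtFiveHom : QuadraticAlgebra ℚ 5 0 →+* ℝ :=
  (QuadraticAlgebra.lift ⟨√5, by norm_num⟩).toRingHom

theorem sqrtFiveHom_apply (z : QuadraticAlgebra ℚ 5 0) : sqrtFiveHom z = z.re + z.im * √5 := by
  simp [sqrtFiveHom, Rat.smul_def]

theorem sqrtFiveHom_injective : Function.Injective sqrtFiveHom := by
  have : Fact (∀ r : ℚ, r ^ 2 ≠ 5 + 0 * r) := ⟨fun r h => by
    have h5 : (r : ℝ) ^ 2 = 5 := by exact_mod_cast (by simpa using h : r ^ 2 = 5)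
    exact Nat.prime_five.irrational_sqrt.ne_rat |r| (by push_cast; rw [← h5, Real.sqrt_sq_eq_abs])⟩
  exact sqrtFiveHom.injective

namespace Icosian

def gen₁ : ℍ[QuadraticAlgebra ℚ 5 0] := ⟨⟨-1/2, 0⟩, ⟨1/4, -1/4⟩, 0, ⟨1/4, 1/4⟩⟩

def gen₂ : ℍ[QuadraticAlgebra ℚ 5 0] := ⟨⟨-1/4, -1/4⟩, 0, ⟨1/4, -1/4⟩, ⟨1/2, 0⟩⟩

-- Eleven rounds: every element of `2I` is a word of length at most ten in `gen₁`, `gen₂`.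
def elements : List ℍ[QuadraticAlgebra ℚ 5 0] := (orbitSearch [gen₁, gen₂] 11).1

theorem star_gen₁ : star gen₁ = gen₁ ^ 2 := by decide +kernel

theorem star_gen₂ : star gen₂ = gen₂ ^ 4 := by decide +kernel

theorem orbitSearch_spec :
    (orbitSearch [gen₁, gen₂] 11).2 = [] ∧ elements.Nodup ∧ elements.length = 120 ∧
      ∀ q ∈ quaternionGroup (QuadraticAlgebra ℚ 5 0), q ∈ elements := by
  decide +kernel

theorem map_gen₁ :
    Quaternion.map sqrtFiveHom gen₁ = ⟨-1 / 2, (1 - √5) / 2 / 2, 0, (1 + √5) / 2 / 2⟩ := by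
  ext <;> simp only [Quaternion.re_map, Quaternion.imI_map, Quaternion.imJ_map,
    Quaternion.imK_map, sqrtFiveHom_apply] <;> simp [gen₁] <;> ring

theorem map_gen₂ :
    Quaternion.map sqrtFiveHom gen₂ = ⟨-((1 + √5) / 2) / 2, 0, (1 - √5) / 2 / 2, 1 / 2⟩ := by
  ext <;> simp only [Quaternion.re_map, Quaternion.imI_map, Quaternion.imJ_map,
    Quaternion.imK_map, sqrtFiveHom_apply] <;> simp [gen₂] <;> ring

theorem coe_closure_map_gens :
    (Submonoid.closure {Quaternion.map sqrtFiveHom gen₁, Quaternion.map sqrtFiveHom gen₂} :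
      Set ℍ[ℝ]) = Quaternion.map sqrtFiveHom '' {x | x ∈ elements} := by
  have hgens : ({gen₁, gen₂} : Set ℍ[QuadraticAlgebra ℚ 5 0]) = {g | g ∈ [gen₁, gen₂]} := by
    ext; simp
  rw [← Set.image_pair, ← MonoidHom.map_mclosure, Submonoid.coe_map, hgens,
    coe_closure_eq_orbitSearch orbitSearch_spec.1]
  rfl

theorem star_mem_closure_map_gens {x : ℍ[ℝ]} (hx : x ∈ Submonoid.closure
      {Quaternion.map sqrtFiveHom gen₁, Quaternion.map sqrtFiveHom gen₂}) :
    star x ∈ Submonoid.closure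
      {Quaternion.map sqrtFiveHom gen₁, Quaternion.map sqrtFiveHom gen₂} := by
  refine Submonoid.star_mem_closure ?_ hx
  rintro _ (rfl | rfl)
  · rw [← Quaternion.map_star, star_gen₁, map_pow]
    exact pow_mem (Submonoid.subset_closure (by simp)) _
  · rw [← Quaternion.map_star, star_gen₂, map_pow]
    exact pow_mem (Submonoid.subset_closure (by simp)) _

theorem quaternionGroup_subset :
    {x | x ∈ quaternionGroup ℝ} ⊆ Quaternion.map sqrtFiveHom '' {x | x ∈ elements} := by
  intro x hx
  rw [Set.mem_ofPred_eq, ← map_quaternionGroup sqrtFiveHom] at hx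
  obtain ⟨q, hq, rfl⟩ := List.mem_map.1 hx
  exact ⟨q, orbitSearch_spec.2.2.2 q hq, rfl⟩

end Icosian

/-- `A₁⁴` split of `H₄`: the quaternion group `Q = {±1, ±i, ±j, ±k}` (the root system
`A₁⊕A₁⊕A₁⊕A₁`) lies inside the binary icosahedral group `G₀` (the 120 roots of `H₄`),
its complement has exactly 112 elements, and this complement is separately invariant
under the spinor reflections in the elements of `Q`. -/
theorem A1_fourth_split_of_H4 :
    ∀ τ σ : ℝ, τ = (1 + Real.sqrt 5) / 2 → σ = (1 - Real.sqrt 5) / 2 →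
    ∀ g₁ g₂ : ℍ[ℝ], g₁ = ⟨-1/2, σ/2, 0, τ/2⟩ → g₂ = ⟨-τ/2, 0, σ/2, 1/2⟩ →
    ∀ G₀ : Submonoid ℍ[ℝ], G₀ = Submonoid.closure {g₁, g₂} →
    ∀ Q : Set ℍ[ℝ],
      Q = {1, -1, ⟨0,1,0,0⟩, -⟨0,1,0,0⟩, ⟨0,0,1,0⟩, -⟨0,0,1,0⟩, ⟨0,0,0,1⟩, -⟨0,0,0,1⟩} →
      Q ⊆ (G₀ : Set ℍ[ℝ]) ∧
      ((G₀ : Set ℍ[ℝ]) \ Q).ncard = 112 ∧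
      (∀ a ∈ Q, ∀ x ∈ (G₀ : Set ℍ[ℝ]) \ Q,
        -(a * star x * a) ∈ (G₀ : Set ℍ[ℝ]) \ Q) := by
  intro τ σ hτ hσ g₁ g₂ hg₁ hg₂ G₀ hG₀ Q hQ
  have hG₀' : G₀ = Submonoid.closure
      {Quaternion.map sqrtFiveHom Icosian.gen₁, Quaternion.map sqrtFiveHom Icosian.gen₂} := by
    rw [hG₀, hg₁, hg₂, hτ, hσ, Icosian.map_gen₁, Icosian.map_gen₂]
  rw [← setOf_mem_quaternionGroup] at hQ
  subst hG₀' hQ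
  obtain ⟨-, hnodup, hcard, -⟩ := Icosian.orbitSearch_spec
  have hQG := Icosian.coe_closure_map_gens ▸ Icosian.quaternionGroup_subset
  refine ⟨hQG, ?_, fun a ha x hx => ?_⟩
  · rw [Icosian.coe_closure_map_gens, Set.ncard_sdiff' Icosian.quaternionGroup_subset
      ((List.finite_toSet _).image _), Set.ncard_image_of_injective _
      (Quaternion.map_injective sqrtFiveHom_injective), List.ncard_setOf_mem hnodup, hcard,
      ncard_setOf_mem_quaternionGroup]
  · exact neg_mul_star_mul_mem_diff_quaternionGroup
      (fun _ => Icosian.star_mem_closure_map_gens) hQG ha hx
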